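/- Let H be a complex Hilbert space, {x_n}_{n≥0} ⊂ H with x_n ≠ 0 for all n and closed linear span ⋁_{n≥0} x_n = H, and let {x'_n}_{n≥0} ⊂ H be a biorthogonal family: (x'_n, x_n) = 1 and (x'_n, x_k) = 0 for k ≠ n. Let Q_n be the rank-one operator Q_n y = (y, x'_n) x_n, let P_n = Σ_{k=0}^n Q_k, and assume sup_{n≥0} ‖P_n‖ < ∞. Let 0 < … < t_{n+1} < t_n < … < t_0 ≤ 2π be a strictly decreasing sequence of positive reals and set λ_n = e^{i t_n}. Then the linear map T defined on the algebraic span of {x_n}_{n≥0} by T x_n = λ_n x_n extends to a bounded operator on H; moreover ‖T x‖ ≤ (2π + 1) (sup_{n≥0} ‖P_n‖) ‖x‖ for every x in the span of the x_n. -/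

import Mathlib

noncomputable section

open scoped InnerProductSpace

lemma exp_I_sub_one_abs_le (a : ℝ) :
    ‖Complex.exp (Complex.I * a) - 1‖ ≤ |a| := by
  rw [mul_comm, Complex.exp_mul_I]
  have h1 : (Complex.cos a + Complex.sin a * Complex.I - 1)
      = ((Real.cos a - 1 : ℝ) : ℂ) + ((Real.sin a : ℝ) : ℂ) * Complex.I := by
    push_cast
    ring
  rw [h1, Complex.norm_add_mul_I]
  rw [← Real.sqrt_sq_eq_abs a]
  apply Real.sqrt_le_sqrt
  have h2 : Real.sin (a / 2) ^ 2 ≤ (a / 2) ^ 2 := Real.sin_sq_le_sq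
  have h3 : Real.cos (a / 2) ^ 2 = 1 / 2 + Real.cos (2 * (a / 2)) / 2 := Real.cos_sq (a / 2)
  have h4 := Real.sin_sq_add_cos_sq (a / 2)
  have h5 := Real.sin_sq_add_cos_sq a
  have h6 : (2 : ℝ) * (a / 2) = a := by ring
  rw [h6] at h3
  nlinarith [sq_abs a]

lemma exp_I_sub_exp_I_abs_le (a b : ℝ) :
    ‖Complex.exp (Complex.I * a) - Complex.exp (Complex.I * b)‖ ≤ |a - b| := by
  have h1 : Complex.exp (Complex.I * a) - Complex.exp (Complex.I * b)
      = Complex.exp (Complex.I * b) * (Complex.exp (Complex.I * ((a : ℂ) - b)) - 1) := by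
    rw [mul_sub, ← Complex.exp_add, mul_one]
    ring_nf
  have h2 : ‖Complex.exp (Complex.I * b)‖ = 1 := by
    rw [Complex.norm_exp]
    simp
  have h3 : ((a : ℂ) - b) = ((a - b : ℝ) : ℂ) := by push_cast; ring
  rw [h1, norm_mul, h2, one_mul, h3]
  exact exp_I_sub_one_abs_le (a - b)

/-- Let `{x_n}` be a sequence of nonzero vectors with dense linear span in a complex Hilbert
space `H`, with a biorthogonal family `{x'_n}`, such that the partial-sum projections
`P_n = Σ_{k≤n} (·, x'_k) x_k` are uniformly bounded.  For a strictly decreasing sequence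
`0 < … < t_{n+1} < t_n < … < t_0 ≤ 2π` and `λ_n = e^{i t_n}`, the diagonal map `x_n ↦ λ_n x_n`
extends to a bounded operator `T` on `H`, with `‖T y‖ ≤ (2π+1)(sup_n ‖P_n‖)‖y‖` on the span. -/
theorem diagonal_operator_bounded_of_uniformly_bounded_partial_sums
    {H : Type} [NormedAddCommGroup H] [InnerProductSpace ℂ H] [CompleteSpace H]
    (x x' : ℕ → H)
    (hx0 : ∀ n, x n ≠ 0)
    (hspan : (Submodule.span ℂ (Set.range x)).topologicalClosure = ⊤)
    (hbi1 : ∀ n, ⟪x' n, x n⟫_ℂ = 1)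
    (hbi0 : ∀ n k, k ≠ n → ⟪x' n, x k⟫_ℂ = 0)
    (P : ℕ → H →L[ℂ] H)
    (hP : ∀ n, P n = ∑ k ∈ Finset.range (n + 1), (innerSL ℂ (x' k)).smulRight (x k))
    (hbdd : BddAbove (Set.range fun n => ‖P n‖))
    (t : ℕ → ℝ) (ht : StrictAnti t) (htpos : ∀ n, 0 < t n) (ht0 : t 0 ≤ 2 * Real.pi) :
    ∃ T : H →L[ℂ] H,
      (∀ n, T (x n) = Complex.exp (Complex.I * (t n : ℂ)) • x n) ∧
      ∀ y ∈ Submodule.span ℂ (Set.range x),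
        ‖T y‖ ≤ (2 * Real.pi + 1) * (⨆ n, ‖P n‖) * ‖y‖ := by
  classical
  set M := ⨆ n, ‖P n‖ with hM
  have hPle : ∀ n, ‖P n‖ ≤ M := fun n => le_ciSup hbdd n
  have hM0 : (0 : ℝ) ≤ M := le_trans (norm_nonneg (P 0)) (hPle 0)
  set lam : ℕ → ℂ := fun n => Complex.exp (Complex.I * (t n : ℂ)) with hlam
  set Tn : ℕ → H →L[ℂ] H :=
    fun N => (∑ n ∈ Finset.range N, (lam n - lam (n + 1)) • P n) + lam N • P N with hTn
  set C := (2 * Real.pi + 1) * M with hC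
  -- norm bound for Tn
  have hlamabs : ∀ n, ‖lam n‖ = 1 := by
    intro n
    simp only [hlam, Complex.norm_exp]
    simp
  have hlamdiff : ∀ n, ‖lam n - lam (n + 1)‖ ≤ t n - t (n + 1) := by
    intro n
    have := exp_I_sub_exp_I_abs_le (t n) (t (n + 1))
    rw [abs_of_nonneg (by linarith [ht (Nat.lt_succ_self n)])] at this
    exact this
  have hTbound : ∀ N, ‖Tn N‖ ≤ C := by
    intro N
    have h1 : ‖Tn N‖ ≤ (∑ n ∈ Finset.range N, ‖(lam n - lam (n + 1)) • P n‖) + ‖lam N • P N‖ :=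
      le_trans (norm_add_le _ _) (by gcongr; exact norm_sum_le _ _)
    have h2 : ∀ n, ‖(lam n - lam (n + 1)) • P n‖ ≤ (t n - t (n + 1)) * M := by
      intro n
      rw [norm_smul]
      exact mul_le_mul (hlamdiff n) (hPle n) (norm_nonneg _)
        (by linarith [ht (Nat.lt_succ_self n)])
    have h3 : (∑ n ∈ Finset.range N, ‖(lam n - lam (n + 1)) • P n‖)
        ≤ ∑ n ∈ Finset.range N, (t n - t (n + 1)) * M :=
      Finset.sum_le_sum fun n _ => h2 n
    have h4 : ∑ n ∈ Finset.range N, (t n - t (n + 1)) * M = (t 0 - t N) * M := by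
      rw [← Finset.sum_mul, Finset.sum_range_sub' t N]
    have h5 : (t 0 - t N) * M ≤ 2 * Real.pi * M := by
      apply mul_le_mul_of_nonneg_right _ hM0
      have := htpos N
      linarith
    have h6 : ‖lam N • P N‖ ≤ M := by
      rw [norm_smul, hlamabs N, one_mul]
      exact hPle N
    calc ‖Tn N‖ ≤ (∑ n ∈ Finset.range N, ‖(lam n - lam (n + 1)) • P n‖) + ‖lam N • P N‖ := h1
      _ ≤ (t 0 - t N) * M + M := by rw [← h4]; exact add_le_add h3 h6
      _ ≤ 2 * Real.pi * M + M := by linarith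
      _ = C := by rw [hC]; ring
  -- action of P on the x k
  have hPx : ∀ n k, P n (x k) = if k ≤ n then x k else 0 := by
    intro n k
    rw [hP n]
    rw [ContinuousLinearMap.sum_apply]
    simp only [ContinuousLinearMap.smulRight_apply, innerSL_apply_apply]
    by_cases hk : k ≤ n
    · rw [Finset.sum_eq_single_of_mem k (Finset.mem_range.2 (Nat.lt_succ_of_le hk))]
      · simp [hbi1 k, hk]
      · intro j _ hj
        rw [hbi0 j k fun h => hj h.symm, zero_smul]
    · rw [if_neg hk, Finset.sum_eq_zero]
      intro j hj
      have : k ≠ j := by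
        intro h
        exact hk (h ▸ Nat.lt_succ_iff.1 (Finset.mem_range.1 hj))
      rw [hbi0 j k this, zero_smul]
  -- action of Tn on the x k
  have hTx : ∀ N k, k ≤ N → Tn N (x k) = lam k • x k := by
    intro N k hkN
    have h1 : Tn N (x k) = (∑ n ∈ Finset.range N, (lam n - lam (n + 1)) • P n (x k))
        + lam N • P N (x k) := by
      simp [hTn, ContinuousLinearMap.sum_apply]
    rw [h1, hPx N k, if_pos hkN]
    have h2 : (∑ n ∈ Finset.range N, (lam n - lam (n + 1)) • P n (x k))
        = ∑ n ∈ Finset.range N, if k ≤ n then (lam n - lam (n + 1)) • x k else 0 := by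
      apply Finset.sum_congr rfl
      intro n _
      rw [hPx n k]
      split <;> simp
    rw [h2, ← Finset.sum_filter]
    have h3 : (Finset.range N).filter (fun n => k ≤ n) = Finset.Ico k N := by
      ext j
      simp [Finset.mem_Ico, and_comm]
    rw [h3, ← Finset.sum_smul]
    have h4 : (∑ n ∈ Finset.Ico k N, (lam n - lam (n + 1))) = lam k - lam N := by
      rw [Finset.sum_Ico_eq_sub _ hkN, Finset.sum_range_sub' lam, Finset.sum_range_sub' lam]
      ring
    rw [h4, ← add_smul]
    ring_nf
  -- convergence on the span
  set S := Submodule.span ℂ (Set.range x) with hS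
  have hconv : ∀ y ∈ S, ∃ z, Filter.Tendsto (fun N => Tn N y) Filter.atTop (nhds z) := by
    intro y hy
    induction hy using Submodule.span_induction with
    | mem y hy =>
      obtain ⟨k, rfl⟩ := hy
      refine ⟨lam k • x k, tendsto_const_nhds.congr' ?_⟩
      filter_upwards [Filter.eventually_ge_atTop k] with N hN
      exact (hTx N k hN).symm
    | zero => exact ⟨0, by simp only [map_zero]; exact tendsto_const_nhds⟩
    | add a b _ _ hA hB =>
      obtain ⟨za, hza⟩ := hA
      obtain ⟨zb, hzb⟩ := hB
      exact ⟨za + zb, by simpa [map_add] using hza.add hzb⟩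
    | smul c a _ hA =>
      obtain ⟨z, hz⟩ := hA
      exact ⟨c • z, by simpa [map_smul] using hz.const_smul c⟩
  choose g hg using fun (y : S) => hconv y y.2
  have hgadd : ∀ a b : S, g (a + b) = g a + g b := by
    intro a b
    refine tendsto_nhds_unique (hg (a + b)) ?_
    have := (hg a).add (hg b)
    simpa [map_add] using this
  have hgsmul : ∀ (c : ℂ) (a : S), g (c • a) = c • g a := by
    intro c a
    refine tendsto_nhds_unique (hg (c • a)) ?_
    have := (hg a).const_smul c
    simpa [map_smul] using this
  have hgle : ∀ y : S, ‖g y‖ ≤ C * ‖(y : H)‖ := by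
    intro y
    refine le_of_tendsto (hg y).norm (Filter.Eventually.of_forall fun N => ?_)
    exact le_trans ((Tn N).le_opNorm _)
      (mul_le_mul_of_nonneg_right (hTbound N) (norm_nonneg _))
  set ℓ : S →L[ℂ] H := LinearMap.mkContinuous
    { toFun := g
      map_add' := hgadd
      map_smul' := hgsmul } C hgle with hℓ
  -- extend to all of H
  have hdense : DenseRange (S.subtypeL : S → H) := by
    have : Dense (S : Set H) := Submodule.dense_iff_topologicalClosure_eq_top.2 hspan
    exact this.denseRange_val
  have hind : IsUniformInducing (S.subtypeL : S →L[ℂ] H) :=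
    isUniformEmbedding_subtype_val.isUniformInducing
  refine ⟨ℓ.extend S.subtypeL, ?_, ?_⟩
  · intro n
    have hmem : x n ∈ S := Submodule.subset_span ⟨n, rfl⟩
    have h1 : ℓ.extend S.subtypeL (S.subtypeL ⟨x n, hmem⟩) = ℓ ⟨x n, hmem⟩ :=
      ContinuousLinearMap.extend_eq _ hdense hind _
    have h2 : (S.subtypeL ⟨x n, hmem⟩ : H) = x n := rfl
    rw [h2] at h1
    rw [h1]
    have h3 : ℓ ⟨x n, hmem⟩ = g ⟨x n, hmem⟩ := rfl
    rw [h3]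
    refine tendsto_nhds_unique (hg ⟨x n, hmem⟩) ?_
    refine tendsto_const_nhds.congr' ?_
    filter_upwards [Filter.eventually_ge_atTop n] with N hN
    exact (hTx N n hN).symm
  · intro y hy
    have h1 : ℓ.extend S.subtypeL (S.subtypeL ⟨y, hy⟩) = ℓ ⟨y, hy⟩ :=
      ContinuousLinearMap.extend_eq _ hdense hind _
    have h2 : (S.subtypeL ⟨y, hy⟩ : H) = y := rfl
    rw [h2] at h1
    rw [h1]
    calc ‖ℓ ⟨y, hy⟩‖ = ‖g ⟨y, hy⟩‖ := rfl
      _ ≤ C * ‖y‖ := hgle ⟨y, hy⟩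
      _ = (2 * Real.pi + 1) * (⨆ n, ‖P n‖) * ‖y‖ := by rw [hC]
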